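/- arXiv:2410.16901 — 5 statements merged into one kernel-verified Lean document; each statement's English description precedes it below -/
import Mathlib

section
/- Let J ∈ ℝ^{(N·O) × P} and J_test ∈ ℝ^{O × P} be real matrices, and let K ∈ ℝ^{((N+1)·O) × P} be the matrix obtained by stacking J on top of J_test. If rank(K Kᵀ) > rank(J Jᵀ), then there exists v ∈ ker(J) with J_test v ≠ 0; equivalently, writing Π for the orthogonal projection of ℝ^P onto ker(J), the trace tr(J_test Π J_testᵀ) is strictly positive. In particular, the predictive variance of the linearized model at the test point under the projected posterior N(θ₀, α⁻¹ Π), which equals α⁻¹ · tr(J_test Π J_testᵀ), is strictly positive. -/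
open Matrix

/-- If stacking the test Jacobian `J_test` below the training Jacobian `J`
strictly increases the rank of the Gram matrix, then some vector in the kernel of `J` is not
annihilated by `J_test`; equivalently, for the orthogonal projection `Π` onto `ker J`, the
trace `tr(J_test Π J_testᵀ)` is strictly positive, and hence so is the predictive variance
`α⁻¹ tr(J_test Π J_testᵀ)` of the projected posterior. -/
theorem projected_posterior_positive_test_variance
    (N O P : ℕ)
    (J : Matrix (Fin (N * O)) (Fin P) ℝ)
    (Jtest : Matrix (Fin O) (Fin P) ℝ)
    (α : ℝ) (hα : 0 < α)
    -- `Π` is the orthogonal projection of `ℝ^P` onto `ker J`: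
    (Pi : Matrix (Fin P) (Fin P) ℝ)
    (hsym : Piᵀ = Pi)
    (hidem : Pi * Pi = Pi)
    (hrange : ∀ v : Fin P → ℝ, J.mulVec (Pi.mulVec v) = 0)
    (hfix : ∀ v : Fin P → ℝ, J.mulVec v = 0 → Pi.mulVec v = v)
    -- the rank condition on the stacked matrix `K = [J; J_test]`:
    (hrank : (J * Jᵀ).rank < (Matrix.fromRows J Jtest * (Matrix.fromRows J Jtest)ᵀ).rank) :
    (∃ v : Fin P → ℝ, J.mulVec v = 0 ∧ Jtest.mulVec v ≠ 0) ∧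
    0 < Matrix.trace (Jtest * Pi * Jtestᵀ) ∧
    0 < α⁻¹ * Matrix.trace (Jtest * Pi * Jtestᵀ) := by
  set K := Matrix.fromRows J Jtest with hK
  have hrk : J.rank < K.rank := by
    rwa [Matrix.rank_self_mul_transpose, Matrix.rank_self_mul_transpose] at hrank
  have hkerle : LinearMap.ker K.mulVecLin ≤ LinearMap.ker J.mulVecLin := by
    intro v hv
    simp only [LinearMap.mem_ker, Matrix.mulVecLin_apply] at hv ⊢
    rw [hK, Matrix.fromRows_mulVec] at hv
    funext i
    simpa using congrFun hv (Sum.inl i)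
  have hfinrank : Module.finrank ℝ (LinearMap.ker K.mulVecLin)
      < Module.finrank ℝ (LinearMap.ker J.mulVecLin) := by
    have h1 := LinearMap.finrank_range_add_finrank_ker K.mulVecLin
    have h2 := LinearMap.finrank_range_add_finrank_ker J.mulVecLin
    have e1 : Module.finrank ℝ (LinearMap.range K.mulVecLin) = K.rank := rfl
    have e2 : Module.finrank ℝ (LinearMap.range J.mulVecLin) = J.rank := rfl
    rw [e1] at h1; rw [e2] at h2
    omega
  have hne : ¬ LinearMap.ker J.mulVecLin ≤ LinearMap.ker K.mulVecLin := fun h =>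
    absurd (Submodule.finrank_mono h) (by omega)
  obtain ⟨v, hvJ, hvK⟩ := SetLike.not_le_iff_exists.mp hne
  have hvJ' : J.mulVec v = 0 := hvJ
  have hvtest : Jtest.mulVec v ≠ 0 := by
    intro h0
    apply hvK
    simp only [LinearMap.mem_ker, Matrix.mulVecLin_apply, hK, Matrix.fromRows_mulVec, hvJ', h0]
    ext (i | i) <;> simp
  have htr : 0 < Matrix.trace (Jtest * Pi * Jtestᵀ) := by
    set B := Jtest * Pi with hB
    have hEq : Jtest * Pi * Jtestᵀ = B * Bᵀ := by
      rw [hB, Matrix.transpose_mul, hsym, ← Matrix.mul_assoc, Matrix.mul_assoc Jtest Pi Pi,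
        hidem]
    rw [hEq]
    have hBtr : (B * Bᵀ).trace = ∑ i, ∑ j, B i j ^ 2 := by
      simp [Matrix.trace, Matrix.diag, Matrix.mul_apply, sq]
    have hBv : B.mulVec v = Jtest.mulVec v := by
      rw [hB, ← Matrix.mulVec_mulVec, hfix v hvJ']
    have hBne : B ≠ 0 := by
      intro h
      rw [h] at hBv
      exact hvtest (by rw [← hBv]; simp)
    obtain ⟨i, j, hij⟩ : ∃ i j, B i j ≠ 0 := by
      by_contra h
      push_neg at h
      exact hBne (by ext i j; simpa using h i j)
    rw [hBtr]
    have hpos : 0 < ∑ j, B i j ^ 2 :=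
      Finset.sum_pos' (fun j _ => sq_nonneg _)
        ⟨j, Finset.mem_univ j, by positivity⟩
    exact Finset.sum_pos' (fun i _ => Finset.sum_nonneg fun j _ => sq_nonneg _)
      ⟨i, Finset.mem_univ i, hpos⟩
  exact ⟨⟨v, hvJ', hvtest⟩, htr, mul_pos (inv_pos.mpr hα) htr⟩
end

section
/- Let α > 0, let J ∈ ℝ^{(N·O) × P} be a real matrix partitioned into N row blocks J₁, …, J_N ∈ ℝ^{O × P}, and let γ and λ denote respectively the smallest and largest singular values of J. Then for every n ∈ {1, …, N}: O·γ²/(γ² + α) ≤ tr(J_n (α I_P + Jᵀ J)⁻¹ J_nᵀ) ≤ O·λ²/(λ² + α). In particular, if γ > 0, the linearized-Laplace predictive variance tr(J_n (α I_P + Jᵀ J)⁻¹ J_nᵀ) on every training datapoint is strictly positive. -/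
/-! With `C = α + J Jᵀ`, the push-through identity `J (α + Jᵀ J)⁻¹ Jᵀ = 1 - α C⁻¹` writes the
variance at `x_n` as `∑ₒ (1 - α C⁻¹_{(n,o),(n,o)})`. As quadratic forms `α + γ² ≤ C ≤ α + λ²`,
and the variational formula `wᵀ C⁻¹ w = max_x (2 xᵀ w - xᵀ C x)` turns this into
`1 / (α + λ²) ≤ C⁻¹_{ii} ≤ 1 / (α + γ²)`, i.e. `γ² / (γ² + α) ≤ 1 - α C⁻¹_{ii} ≤ λ² / (λ² + α)`. -/

open Matrix

theorem dotProduct_self_nonneg {ι R : Type*} [Fintype ι] [Ring R] [LinearOrder R]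
    [IsStrictOrderedRing R] (v : ι → R) : 0 ≤ v ⬝ᵥ v :=
  Fintype.sum_nonneg fun i => mul_self_nonneg (v i)

namespace Matrix

theorem submatrix_id_mul_mul_transpose {k m n R : Type*} [Fintype n] [Semiring R]
    (J : Matrix m n R) (X : Matrix n n R) (f : k → m) :
    J.submatrix f id * X * (J.submatrix f id)ᵀ = (J * X * Jᵀ).submatrix f f := by
  rw [transpose_submatrix, ← submatrix_id_id X, ← submatrix_mul _ _ _ _ _ Function.bijective_id,
    ← submatrix_mul _ _ _ _ _ Function.bijective_id, submatrix_id_id]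

theorem smul_one_add_mulVec_dotProduct {m R : Type*} [Fintype m] [DecidableEq m] [CommSemiring R]
    (a : R) (B : Matrix m m R) (w : m → R) :
    (a • 1 + B) *ᵥ w ⬝ᵥ w = a * (w ⬝ᵥ w) + B *ᵥ w ⬝ᵥ w := by
  rw [add_mulVec, add_dotProduct, smul_mulVec, one_mulVec, smul_dotProduct, smul_eq_mul]

theorem mulVec_single_one_dotProduct_single_one {m R : Type*} [Fintype m] [DecidableEq m]
    [CommSemiring R] (A : Matrix m m R) (i : m) :
    A *ᵥ Pi.single i 1 ⬝ᵥ Pi.single i 1 = A i i := by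
  rw [dotProduct_single_one, mulVec_single_one, col_apply]

section QuadraticForm

variable {ι : Type*} [Fintype ι] [DecidableEq ι] {C : Matrix ι ι ℝ}

theorem isUnit_of_forall_mul_dotProduct_le {m : ℝ} (hm : 0 < m)
    (hC : ∀ v, m * (v ⬝ᵥ v) ≤ C *ᵥ v ⬝ᵥ v) : IsUnit C := by
  refine mulVec_injective_iff_isUnit.1 fun x y hxy => sub_eq_zero.1 (dotProduct_self_eq_zero.1 ?_)
  have h := hC (x - y)
  rw [mulVec_sub, hxy, sub_self, zero_dotProduct] at h
  nlinarith [dotProduct_self_nonneg (x - y)]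

theorem inv_mulVec_dotProduct_le {m : ℝ} (hm : 0 < m)
    (hC : ∀ v, m * (v ⬝ᵥ v) ≤ C *ᵥ v ⬝ᵥ v) (w : ι → ℝ) :
    C⁻¹ *ᵥ w ⬝ᵥ w ≤ (w ⬝ᵥ w) / m := by
  have hdet := (isUnit_iff_isUnit_det C).1 (isUnit_of_forall_mul_dotProduct_le hm hC)
  set u := C⁻¹ *ᵥ w
  have hCu : C *ᵥ u = w := by rw [mulVec_mulVec, mul_nonsing_inv _ hdet, one_mulVec]
  have hu : m * (u ⬝ᵥ u) ≤ w ⬝ᵥ u := by simpa only [hCu] using hC u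
  have hsq := dotProduct_self_nonneg (m • u - w)
  simp only [sub_dotProduct, dotProduct_sub, smul_dotProduct, dotProduct_smul, smul_eq_mul,
    dotProduct_comm u w] at hsq
  rw [dotProduct_comm, le_div_iff₀ hm]
  nlinarith [mul_le_mul_of_nonneg_left hu hm.le]

theorem div_le_inv_mulVec_dotProduct (hC : C.PosDef) {M : ℝ} (hM : 0 < M) {w : ι → ℝ}
    (hw : C *ᵥ w ⬝ᵥ w ≤ M * (w ⬝ᵥ w)) : (w ⬝ᵥ w) / M ≤ C⁻¹ *ᵥ w ⬝ᵥ w := by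
  have hdet := (isUnit_iff_isUnit_det C).1 hC.isUnit
  set u := C⁻¹ *ᵥ w
  have hCu : C *ᵥ u = w := by rw [mulVec_mulVec, mul_nonsing_inv _ hdet, one_mulVec]
  have hsymm : u ⬝ᵥ C *ᵥ w = w ⬝ᵥ w := by
    have hCt : Cᵀ = C := by simpa using hC.isHermitian.eq
    rw [dotProduct_mulVec, ← mulVec_transpose, hCt, hCu]
  have hq := hC.posSemidef.dotProduct_mulVec_nonneg (M • u - w)
  simp only [star_trivial, mulVec_sub, mulVec_smul, hCu, sub_dotProduct, dotProduct_sub,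
    smul_dotProduct, dotProduct_smul, smul_eq_mul, hsymm, dotProduct_comm w (C *ᵥ w)] at hq
  rw [dotProduct_comm, div_le_iff₀ hM]
  nlinarith

end QuadraticForm

/-- The hat matrix of ridge regression with penalty `a`; its diagonal `O × O` blocks are the
linearized-Laplace predictive covariances at the training points. -/
noncomputable def ridgeHat {m n R : Type*} [Fintype m] [Fintype n] [DecidableEq n] [CommRing R]
    (J : Matrix m n R) (a : R) : Matrix m m R :=
  J * (a • (1 : Matrix n n R) + Jᵀ * J)⁻¹ * Jᵀ

theorem posDef_smul_one_add_mul_transpose {m n : Type*} [Fintype m] [Fintype n] [DecidableEq m]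
    (J : Matrix m n ℝ) {a : ℝ} (ha : 0 < a) : (a • 1 + J * Jᵀ).PosDef :=
  (PosDef.one.smul ha).add_posSemidef (by simpa using posSemidef_self_mul_conjTranspose J)

section RidgeHat

variable {m n : Type*} [Fintype m] [Fintype n] [DecidableEq m] [DecidableEq n]

theorem ridgeHat_eq_one_sub_smul_inv {R : Type*} [CommRing R] (J : Matrix m n R) (a : R)
    (hA : IsUnit (a • 1 + Jᵀ * J).det) (hC : IsUnit (a • 1 + J * Jᵀ).det) :
    ridgeHat J a = 1 - a • (a • 1 + J * Jᵀ)⁻¹ := by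
  have hCJ : (a • 1 + J * Jᵀ) * J = J * (a • 1 + Jᵀ * J) := by
    rw [Matrix.add_mul, Matrix.mul_add, Matrix.smul_mul, Matrix.mul_smul, Matrix.one_mul,
      Matrix.mul_one, Matrix.mul_assoc]
  set A := a • 1 + Jᵀ * J
  set C := a • 1 + J * Jᵀ
  have push : J * A⁻¹ = C⁻¹ * J := calc
    J * A⁻¹ = C⁻¹ * (J * A) * A⁻¹ := by rw [← hCJ, nonsing_inv_mul_cancel_left _ _ hC]
    _ = C⁻¹ * J := by rw [Matrix.mul_assoc, mul_nonsing_inv_cancel_right _ _ hA]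
  have hJJ : J * Jᵀ = C - a • 1 := by simp [C]
  rw [ridgeHat, push, Matrix.mul_assoc, hJJ, Matrix.mul_sub, nonsing_inv_mul _ hC,
    Matrix.mul_smul, Matrix.mul_one]

theorem ridgeHat_apply_self (J : Matrix m n ℝ) {a : ℝ} (ha : 0 < a) (i : m) :
    ridgeHat J a i i = 1 - a * (a • (1 : Matrix m m ℝ) + J * Jᵀ)⁻¹ i i := by
  have hA := (posDef_smul_one_add_mul_transpose Jᵀ ha).isUnit
  have hC := (posDef_smul_one_add_mul_transpose J ha).isUnit
  rw [transpose_transpose] at hA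
  rw [ridgeHat_eq_one_sub_smul_inv J a ((isUnit_iff_isUnit_det _).1 hA)
    ((isUnit_iff_isUnit_det _).1 hC)]
  simp

theorem div_add_le_ridgeHat_apply_self (J : Matrix m n ℝ) {a s : ℝ} (ha : 0 < a) (hs : 0 ≤ s)
    (hJ : ∀ w, s * (w ⬝ᵥ w) ≤ (J * Jᵀ) *ᵥ w ⬝ᵥ w) (i : m) :
    s / (s + a) ≤ ridgeHat J a i i := by
  have hC : ∀ w, (a + s) * (w ⬝ᵥ w) ≤ (a • 1 + J * Jᵀ) *ᵥ w ⬝ᵥ w := fun w => by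
    rw [smul_one_add_mulVec_dotProduct]; linarith [hJ w]
  have h := inv_mulVec_dotProduct_le (by positivity) hC (Pi.single i 1)
  rw [mulVec_single_one_dotProduct_single_one, single_one_dotProduct, Pi.single_eq_same] at h
  rw [ridgeHat_apply_self J ha, div_le_iff₀ (by positivity)]
  rw [le_div_iff₀ (by positivity)] at h
  nlinarith

theorem ridgeHat_apply_self_le_div_add (J : Matrix m n ℝ) {a t : ℝ} (ha : 0 < a)
    (hJ : ∀ w, (J * Jᵀ) *ᵥ w ⬝ᵥ w ≤ t * (w ⬝ᵥ w)) (i : m) :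
    ridgeHat J a i i ≤ t / (t + a) := by
  have ht : 0 ≤ t := by
    have h := hJ (Pi.single i 1)
    rw [mulVec_single_one_dotProduct_single_one, single_one_dotProduct, Pi.single_eq_same] at h
    have hdiag : 0 ≤ (J * Jᵀ) i i := by
      simpa using (posSemidef_self_mul_conjTranspose J).diag_nonneg (i := i)
    linarith
  have hC : (a • 1 + J * Jᵀ) *ᵥ Pi.single i 1 ⬝ᵥ Pi.single i 1 ≤
      (a + t) * (Pi.single i 1 ⬝ᵥ Pi.single i 1) := by
    rw [smul_one_add_mulVec_dotProduct]; linarith [hJ (Pi.single i 1)]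
  have h := div_le_inv_mulVec_dotProduct (posDef_smul_one_add_mul_transpose J ha)
    (by positivity) hC
  rw [mulVec_single_one_dotProduct_single_one, single_one_dotProduct, Pi.single_eq_same] at h
  rw [ridgeHat_apply_self J ha, le_div_iff₀ (by positivity)]
  rw [div_le_iff₀ (by positivity)] at h
  nlinarith

end RidgeHat

end Matrix

theorem lla_training_variance_bounds_general
    (N O P : ℕ) (hO : 0 < O)
    (J : Matrix (Fin N × Fin O) (Fin P) ℝ)
    (α : ℝ) (hα : 0 < α)
    (γ lam : ℝ)
    -- `γ` is the smallest singular value of `J`: `γ²` is the least eigenvalue of `J Jᵀ`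
    (hγ_le : ∀ w : Fin N × Fin O → ℝ, γ ^ 2 * (w ⬝ᵥ w) ≤ (J * Jᵀ).mulVec w ⬝ᵥ w)
    -- `lam` is the largest singular value of `J`: `lam²` is the top eigenvalue of `J Jᵀ`
    (hlam_le : ∀ w : Fin N × Fin O → ℝ, (J * Jᵀ).mulVec w ⬝ᵥ w ≤ lam ^ 2 * (w ⬝ᵥ w)) :
    ∀ n : Fin N,
      (O : ℝ) * γ ^ 2 / (γ ^ 2 + α) ≤
        Matrix.trace (J.submatrix (fun o : Fin O => (n, o)) id *
          (α • (1 : Matrix (Fin P) (Fin P) ℝ) + Jᵀ * J)⁻¹ *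
          (J.submatrix (fun o : Fin O => (n, o)) id)ᵀ) ∧
      Matrix.trace (J.submatrix (fun o : Fin O => (n, o)) id *
          (α • (1 : Matrix (Fin P) (Fin P) ℝ) + Jᵀ * J)⁻¹ *
          (J.submatrix (fun o : Fin O => (n, o)) id)ᵀ) ≤
        (O : ℝ) * lam ^ 2 / (lam ^ 2 + α) ∧
      (0 < γ →
        0 < Matrix.trace (J.submatrix (fun o : Fin O => (n, o)) id *
          (α • (1 : Matrix (Fin P) (Fin P) ℝ) + Jᵀ * J)⁻¹ *
          (J.submatrix (fun o : Fin O => (n, o)) id)ᵀ)) := by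
  intro n
  rw [submatrix_id_mul_mul_transpose]
  change _ ≤ ∑ o, ridgeHat J α (n, o) (n, o) ∧ ∑ o, ridgeHat J α (n, o) (n, o) ≤ _ ∧
    (0 < γ → 0 < ∑ o, ridgeHat J α (n, o) (n, o))
  have hlo : (O : ℝ) * γ ^ 2 / (γ ^ 2 + α) ≤ ∑ o, ridgeHat J α (n, o) (n, o) := by
    simpa [mul_div_assoc] using Finset.card_nsmul_le_sum Finset.univ _ _ fun o _ =>
      div_add_le_ridgeHat_apply_self J hα (sq_nonneg γ) hγ_le (n, o)
  have hhi : ∑ o, ridgeHat J α (n, o) (n, o) ≤ (O : ℝ) * lam ^ 2 / (lam ^ 2 + α) := by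
    simpa [mul_div_assoc] using Finset.sum_le_card_nsmul Finset.univ _ _ fun o _ =>
      ridgeHat_apply_self_le_div_add J hα hlam_le (n, o)
  refine ⟨hlo, hhi, fun hγ => lt_of_lt_of_le ?_ hlo⟩
  have : (0 : ℝ) < O := Nat.cast_pos.2 hO
  positivity

/-- For the linearized Laplace posterior with covariance `(α I + Jᵀ J)⁻¹`,
the predictive variance `tr(J_n (α I + Jᵀ J)⁻¹ J_nᵀ)` on every training datapoint is sandwiched
between `O γ²/(γ² + α)` and `O λ²/(λ² + α)`, where `γ` and `λ` are the smallest and largest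
singular values of the stacked Jacobian `J` (characterized below via the quadratic form of
`J Jᵀ`, whose eigenvalues are the squared singular values of `J`).  In particular, if `γ > 0`
the variance is strictly positive. -/
theorem lla_training_variance_bounds
    (N O P : ℕ) (hO : 0 < O)
    (J : Matrix (Fin N × Fin O) (Fin P) ℝ)
    (α : ℝ) (hα : 0 < α)
    (γ lam : ℝ) (hγ0 : 0 ≤ γ) (hlam0 : 0 ≤ lam)
    -- `γ` is the smallest singular value of `J`: `γ²` is the least eigenvalue of `J Jᵀ`
    (hγ_le : ∀ w : Fin N × Fin O → ℝ, γ ^ 2 * (w ⬝ᵥ w) ≤ (J * Jᵀ).mulVec w ⬝ᵥ w)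
    (hγ_ex : ∃ w : Fin N × Fin O → ℝ, w ≠ 0 ∧ (J * Jᵀ).mulVec w ⬝ᵥ w = γ ^ 2 * (w ⬝ᵥ w))
    -- `lam` is the largest singular value of `J`: `lam²` is the top eigenvalue of `J Jᵀ`
    (hlam_le : ∀ w : Fin N × Fin O → ℝ, (J * Jᵀ).mulVec w ⬝ᵥ w ≤ lam ^ 2 * (w ⬝ᵥ w))
    (hlam_ex : ∃ w : Fin N × Fin O → ℝ, w ≠ 0 ∧ (J * Jᵀ).mulVec w ⬝ᵥ w = lam ^ 2 * (w ⬝ᵥ w)) :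
    ∀ n : Fin N,
      (O : ℝ) * γ ^ 2 / (γ ^ 2 + α) ≤
        Matrix.trace (J.submatrix (fun o : Fin O => (n, o)) id *
          (α • (1 : Matrix (Fin P) (Fin P) ℝ) + Jᵀ * J)⁻¹ *
          (J.submatrix (fun o : Fin O => (n, o)) id)ᵀ) ∧
      Matrix.trace (J.submatrix (fun o : Fin O => (n, o)) id *
          (α • (1 : Matrix (Fin P) (Fin P) ℝ) + Jᵀ * J)⁻¹ *
          (J.submatrix (fun o : Fin O => (n, o)) id)ᵀ) ≤
        (O : ℝ) * lam ^ 2 / (lam ^ 2 + α) ∧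
      (0 < γ →
        0 < Matrix.trace (J.submatrix (fun o : Fin O => (n, o)) id *
          (α • (1 : Matrix (Fin P) (Fin P) ℝ) + Jᵀ * J)⁻¹ *
          (J.submatrix (fun o : Fin O => (n, o)) id)ᵀ)) :=
  lla_training_variance_bounds_general N O P hO J α hα γ lam hγ_le hlam_le
end

section
/- Let G ∈ ℝ^{P × P} be a nonzero symmetric positive semidefinite matrix, let τ > 0 be its smallest nonzero eigenvalue, let 𝒫(G) denote the orthogonal projection onto the image of G, and let α > 0. Then in operator (spectral) norm: ‖(α I_P + G)⁻¹ − α⁻¹ (I_P − 𝒫(G))‖ ≤ 1/(τ + α). -/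
/-!
With `M = α I + G`, the relation `G Q = G` (transpose of `Q G = G`) gives
`M⁻¹ - α⁻¹ (I - Q) = M⁻¹ Q`. For `v = M⁻¹ Q u` we have `α v = Q u - G v`, so `v` lies in the
image of `G` and is fixed by `Q`; hence
`(τ + α) ‖v‖² ≤ ⟪M v, v⟫ = ⟪Q u, v⟫ = ⟪u, v⟫ ≤ ‖u‖ ‖v‖`.
-/

open Matrix

open scoped RealInnerProductSpace in
theorem ContinuousLinearMap.opNorm_le_one_div_of_mul_norm_sq_le_inner
    {E : Type*} [NormedAddCommGroup E] [InnerProductSpace ℝ E] (T : E →L[ℝ] E) {c : ℝ}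
    (hc : 0 < c) (h : ∀ x, c * ‖T x‖ ^ 2 ≤ ⟪x, T x⟫) : ‖T‖ ≤ 1 / c := by
  refine T.opNorm_le_bound (by positivity) fun x ↦ ?_
  have hsq : c * ‖T x‖ ^ 2 ≤ ‖x‖ * ‖T x‖ := (h x).trans (real_inner_le_norm _ _)
  have hlin : c * ‖T x‖ ≤ ‖x‖ := by
    rcases (norm_nonneg (T x)).eq_or_lt with h0 | hpos
    · rw [← h0, mul_zero]
      exact norm_nonneg x
    · exact le_of_mul_le_mul_right (by linarith) hpos
  rwa [one_div, inv_mul_eq_div, le_div_iff₀ hc, mul_comm]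

theorem Matrix.norm_toEuclideanCLM_le_one_div {n : Type*} [Fintype n] [DecidableEq n]
    (A : Matrix n n ℝ) {c : ℝ} (hc : 0 < c)
    (h : ∀ u, c * (A *ᵥ u ⬝ᵥ A *ᵥ u) ≤ u ⬝ᵥ A *ᵥ u) :
    ‖toEuclideanCLM (𝕜 := ℝ) A‖ ≤ 1 / c := by
  refine ContinuousLinearMap.opNorm_le_one_div_of_mul_norm_sq_le_inner _ hc fun x ↦ ?_
  rw [← real_inner_self_eq_norm_sq, inner_toEuclideanCLM, inner_toEuclideanCLM,
    ofLp_toEuclideanCLM]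
  exact h _

theorem Matrix.inv_smul_one_add_sub_smul_one_sub_eq_inv_mul {n K : Type*} [Fintype n]
    [DecidableEq n] [Field K] {G Q : Matrix n n K} {α : K} (hα : α ≠ 0)
    (hM : IsUnit (α • (1 : Matrix n n K) + G)) (hGQ : G * Q = G) :
    (α • (1 : Matrix n n K) + G)⁻¹ - α⁻¹ • (1 - Q) = (α • 1 + G)⁻¹ * Q := by
  have hfix : (α • 1 + G) * (α⁻¹ • (1 - Q)) = 1 - Q := by
    rw [add_mul, smul_mul_smul, mul_inv_cancel₀ hα, one_smul, one_mul, mul_smul_comm, mul_sub,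
      mul_one, hGQ, sub_self, smul_zero, add_zero]
  calc (α • 1 + G)⁻¹ - α⁻¹ • (1 - Q)
      = (α • 1 + G)⁻¹ * 1 - (α • 1 + G)⁻¹ * ((α • 1 + G) * (α⁻¹ • (1 - Q))) := by
        rw [mul_one, nonsing_inv_mul_cancel_left _ _ ((isUnit_iff_isUnit_det _).mp hM)]
    _ = (α • 1 + G)⁻¹ * Q := by rw [hfix, ← mul_sub, sub_sub_cancel]

theorem Matrix.eq_mulVec_of_smul_add_mulVec_eq {n K : Type*} [Fintype n] [Field K]
    {G : Matrix n n K} {α : K} (hα : α ≠ 0) {v w : n → K}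
    (h : α • v + G *ᵥ v = G *ᵥ w) : v = G *ᵥ (α⁻¹ • (w - v)) := by
  rw [mulVec_smul, mulVec_sub, ← h, add_sub_cancel_right, smul_smul, inv_mul_cancel₀ hα,
    one_smul]

theorem Matrix.add_mul_dotProduct_self_le_dotProduct {n : Type*} [Fintype n] [DecidableEq n]
    {G Q : Matrix n n ℝ} {α τ : ℝ} (hα : α ≠ 0)
    (hτ_le : ∀ v : n → ℝ, (∃ w, v = G *ᵥ w) → τ * (v ⬝ᵥ v) ≤ G *ᵥ v ⬝ᵥ v)
    (hQsym : Qᵀ = Q) (hQfix : Q * G = G) {u v : n → ℝ} (hu : ∃ w, Q *ᵥ u = G *ᵥ w)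
    (hv : (α • 1 + G) *ᵥ v = Q *ᵥ u) :
    (τ + α) * (v ⬝ᵥ v) ≤ u ⬝ᵥ v := by
  obtain ⟨w, hw⟩ := hu
  have hMv : (α • 1 + G) *ᵥ v = α • v + G *ᵥ v := by
    rw [add_mulVec, smul_mulVec, one_mulVec]
  have hvG := eq_mulVec_of_smul_add_mulVec_eq hα (by rw [← hMv, hv, hw])
  have hQv : v ᵥ* Q = v := by
    rw [← mulVec_transpose, hQsym, hvG, mulVec_mulVec, hQfix]
  calc (τ + α) * (v ⬝ᵥ v) = τ * (v ⬝ᵥ v) + α * (v ⬝ᵥ v) := add_mul _ _ _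
    _ ≤ G *ᵥ v ⬝ᵥ v + α * (v ⬝ᵥ v) := by gcongr; exact hτ_le v ⟨_, hvG⟩
    _ = Q *ᵥ u ⬝ᵥ v := by rw [← hv, hMv, add_dotProduct, smul_dotProduct, smul_eq_mul, add_comm]
    _ = u ⬝ᵥ v := by rw [dotProduct_comm, dotProduct_mulVec, hQv, dotProduct_comm]

theorem lla_vs_projected_covariance_spectral_bound_general
    (P : ℕ)
    (G : Matrix (Fin P) (Fin P) ℝ) (hG : G.PosSemidef)
    (α : ℝ) (hα : 0 < α)
    (τ : ℝ) (hτ : 0 < τ)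
    -- `τ` is the smallest nonzero eigenvalue of `G`:
    (hτ_le : ∀ v : Fin P → ℝ, (∃ w, v = G.mulVec w) → τ * (v ⬝ᵥ v) ≤ G.mulVec v ⬝ᵥ v)
    -- `Q` is the orthogonal projection onto the image of `G`:
    (Q : Matrix (Fin P) (Fin P) ℝ)
    (hQsym : Qᵀ = Q)
    (hQfix : Q * G = G)
    (hQrange : ∀ v : Fin P → ℝ, ∃ w, Q.mulVec v = G.mulVec w) :
    ‖Matrix.toEuclideanCLM (𝕜 := ℝ)
        ((α • (1 : Matrix (Fin P) (Fin P) ℝ) + G)⁻¹ -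
          α⁻¹ • ((1 : Matrix (Fin P) (Fin P) ℝ) - Q))‖ ≤ 1 / (τ + α) := by
  have hGQ : G * Q = G := by
    have h := congrArg transpose hQfix
    rwa [transpose_mul, hQsym, ← conjTranspose_eq_transpose_of_trivial, hG.isHermitian.eq] at h
  have hM : (α • 1 + G).PosDef := (PosDef.one.smul hα).add_posSemidef hG
  rw [inv_smul_one_add_sub_smul_one_sub_eq_inv_mul hα.ne' hM.isUnit hGQ]
  refine norm_toEuclideanCLM_le_one_div _ (by positivity) fun u ↦ ?_
  refine add_mul_dotProduct_self_le_dotProduct hα.ne' hτ_le hQsym hQfix (hQrange u) ?_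
  rw [mulVec_mulVec, mul_nonsing_inv_cancel_left _ _ ((isUnit_iff_isUnit_det _).mp hM.isUnit)]

/-- For a nonzero symmetric psd matrix `G` with smallest nonzero eigenvalue
`τ > 0`, orthogonal projection `Q = 𝒫(G)` onto the image of `G`, and `α > 0`, the spectral
norm of the difference between the LLA covariance `(α I + G)⁻¹` and the scaled projected
covariance `α⁻¹ (I - Q)` is at most `1/(τ + α)`. -/
theorem lla_vs_projected_covariance_spectral_bound
    (P : ℕ)
    (G : Matrix (Fin P) (Fin P) ℝ) (hG : G.PosSemidef) (hG0 : G ≠ 0)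
    (α : ℝ) (hα : 0 < α)
    (τ : ℝ) (hτ : 0 < τ)
    -- `τ` is the smallest nonzero eigenvalue of `G`:
    (hτ_le : ∀ v : Fin P → ℝ, (∃ w, v = G.mulVec w) → τ * (v ⬝ᵥ v) ≤ G.mulVec v ⬝ᵥ v)
    (hτ_ex : ∃ v : Fin P → ℝ, v ≠ 0 ∧ G.mulVec v = τ • v)
    -- `Q` is the orthogonal projection onto the image of `G`:
    (Q : Matrix (Fin P) (Fin P) ℝ)
    (hQsym : Qᵀ = Q) (hQidem : Q * Q = Q)
    (hQfix : Q * G = G)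
    (hQrange : ∀ v : Fin P → ℝ, ∃ w, Q.mulVec v = G.mulVec w) :
    ‖Matrix.toEuclideanCLM (𝕜 := ℝ)
        ((α • (1 : Matrix (Fin P) (Fin P) ℝ) + G)⁻¹ -
          α⁻¹ • ((1 : Matrix (Fin P) (Fin P) ℝ) - Q))‖ ≤ 1 / (τ + α) :=
  lla_vs_projected_covariance_spectral_bound_general P G hG α hα τ hτ hτ_le Q hQsym hQfix hQrange
end

section
/- Let G ∈ ℝ^{P × P} be a nonzero symmetric positive semidefinite matrix with smallest nonzero eigenvalue τ > 0 and rank k, let 𝒫(G) be the orthogonal projection onto the image of G, and let α > 0. Set A = (α I_P + G)⁻¹ and B = α⁻¹ (I_P − 𝒫(G)). Then A and B are commuting symmetric positive semidefinite matrices and the squared Frobenius distance between their positive semidefinite square roots satisfies ‖A^{1/2} − B^{1/2}‖_F² ≤ k/(τ + α). Since A and B commute, this quantity equals the squared 2-Wasserstein distance between the Gaussians N(θ₀, A) and N(θ₀, B) with common mean θ₀, i.e. d²(q_LLA, q_proj) ≤ k/(τ + α). -/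
/-!
The projection `Q` onto `range G` commutes with `G`, hence with `A = (α + G)⁻¹` and with `√A`;
on `ker G` the matrix `A` acts as `α⁻¹`, so `B = A (1 - Q)` and `√B = √A (1 - Q)`. Thus
`√A - √B = √A Q`, whose squared Frobenius norm is `tr (A Q)`. Finally `G ≥ τ Q` gives
`A (G - τ Q) = Q - (τ + α) A Q`, a product of positive semidefinite matrices, so its trace is
nonnegative and `(τ + α) tr (A Q) ≤ tr Q = rank G`.
-/

open Matrix

section PosSemidefSqrt

open scoped ComplexOrder

/-- The positive semidefinite square root of a positive semidefinite matrix
(the Mathlib definition of December 2024, since removed from Mathlib). -/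
noncomputable def Matrix.PosSemidef.sqrt {n : Type*} {𝕜 : Type*} [Fintype n] [DecidableEq n]
    [RCLike 𝕜] {A : Matrix n n 𝕜} (hA : A.PosSemidef) : Matrix n n 𝕜 :=
  hA.1.eigenvectorUnitary.1 * diagonal ((↑) ∘ (√·) ∘ hA.1.eigenvalues) *
  (star hA.1.eigenvectorUnitary : Matrix n n 𝕜)

end PosSemidefSqrt

namespace Matrix

section Sqrt

open scoped MatrixOrder ComplexOrder

variable {n 𝕜 : Type*} [Fintype n] [DecidableEq n] [RCLike 𝕜] {A B Q : Matrix n n 𝕜}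

lemma PosSemidef.sqrt_eq_cfc (hA : A.PosSemidef) : hA.sqrt = CFC.sqrt A := by
  rw [CFC.sqrt_eq_real_sqrt A hA.nonneg, cfcₙ_eq_cfc, hA.1.cfc_eq]
  simp [IsHermitian.cfc, PosSemidef.sqrt, Unitary.conjStarAlgAut_apply]

lemma PosSemidef.posSemidef_sqrt (hA : A.PosSemidef) : hA.sqrt.PosSemidef := by
  rw [hA.sqrt_eq_cfc]
  exact (CFC.sqrt_nonneg A).posSemidef

lemma PosSemidef.sqrt_mul_self (hA : A.PosSemidef) : hA.sqrt * hA.sqrt = A := by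
  rw [hA.sqrt_eq_cfc]
  exact CFC.sqrt_mul_sqrt_self A hA.nonneg

lemma PosSemidef.sqrt_eq_of_mul_self_eq (hA : A.PosSemidef) (hB : B.PosSemidef) (h : B * B = A) :
    hA.sqrt = B := by
  rw [hA.sqrt_eq_cfc]
  exact (CFC.sqrt_eq_iff A B hA.nonneg hB.nonneg).mpr h

lemma PosSemidef.commute_sqrt (hA : A.PosSemidef) (h : Commute A Q) : Commute hA.sqrt Q := by
  rw [hA.sqrt_eq_cfc, CFC.sqrt_eq_real_sqrt A hA.nonneg, cfcₙ_eq_cfc]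
  exact h.cfc_real _

lemma PosSemidef.trace_mul_nonneg (hA : A.PosSemidef) (hB : B.PosSemidef) :
    0 ≤ (A * B).trace := by
  have := (hB.conjTranspose_mul_mul_same hA.sqrt).trace_nonneg
  rwa [hA.posSemidef_sqrt.1.eq, trace_mul_cycle, hA.sqrt_mul_self] at this

lemma PosSemidef.sqrt_mul_mul_sqrt_mul (hA : A.PosSemidef) (hQQ : IsIdempotentElem Q)
    (h : Commute A Q) : hA.sqrt * Q * (hA.sqrt * Q) = A * Q := by
  rw [mul_assoc, ← mul_assoc Q, ← (hA.commute_sqrt h).eq, mul_assoc, hQQ.eq, ← mul_assoc,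
    hA.sqrt_mul_self]

lemma PosSemidef.sqrt_mul_of_commute (hA : A.PosSemidef) (hQ : Q.IsHermitian)
    (hQQ : IsIdempotentElem Q) (h : Commute A Q) (hAQ : (A * Q).PosSemidef) :
    hAQ.sqrt = hA.sqrt * Q := by
  refine hAQ.sqrt_eq_of_mul_self_eq ?_ (hA.sqrt_mul_mul_sqrt_mul hQQ h)
  have := hA.posSemidef_sqrt.conjTranspose_mul_mul_same Q
  rwa [hQ.eq, ← (hA.commute_sqrt h).eq, mul_assoc, hQQ.eq] at this

lemma PosSemidef.trace_sqrt_sub_sqrt (hA : A.PosSemidef) (hQ : Q.IsHermitian)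
    (hQQ : IsIdempotentElem Q) (h : Commute A Q) (hB : (A * (1 - Q)).PosSemidef) :
    ((hA.sqrt - hB.sqrt)ᴴ * (hA.sqrt - hB.sqrt)).trace = (A * Q).trace := by
  have hdiff : hA.sqrt - hA.sqrt * (1 - Q) = hA.sqrt * Q := by
    rw [mul_sub, mul_one, sub_sub_cancel]
  rw [hA.sqrt_mul_of_commute (isHermitian_one.sub hQ) hQQ.one_sub
    ((Commute.one_right A).sub_right h), hdiff, conjTranspose_mul, hQ.eq,
    hA.posSemidef_sqrt.1.eq, ← (hA.commute_sqrt h).eq, hA.sqrt_mul_mul_sqrt_mul hQQ h]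

end Sqrt

section Projection

variable {n K : Type*} [Fintype n] [Field K] {G Q : Matrix n n K}

lemma trace_eq_rank_of_isIdempotentElem [DecidableEq n] (hQ : IsIdempotentElem Q) :
    Q.trace = (Q.rank : K) := by
  have hproj : LinearMap.IsProj (LinearMap.range Q.mulVecLin) Q.mulVecLin :=
    ⟨LinearMap.mem_range_self _, by
      rintro _ ⟨y, rfl⟩
      simp [mulVec_mulVec, hQ.eq]⟩
  have ht := hproj.trace
  rw [LinearMap.trace_eq_matrix_trace K (Pi.basisFun K n), LinearMap.toMatrix_eq_toMatrix',
    ← toLin'_apply', LinearMap.toMatrix'_toLin'] at ht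
  rw [ht, rank, toLin'_apply']

lemma rank_eq_of_mul_eq_of_range (hQG : Q * G = G) (hQrange : ∀ v, ∃ w, Q *ᵥ v = G *ᵥ w) :
    Q.rank = G.rank := by
  suffices LinearMap.range Q.mulVecLin = LinearMap.range G.mulVecLin by rw [rank, rank, this]
  apply le_antisymm
  · rintro _ ⟨v, rfl⟩
    obtain ⟨w, hw⟩ := hQrange v
    exact ⟨w, hw.symm⟩
  · rintro _ ⟨v, rfl⟩
    exact ⟨G *ᵥ v, by simp [mulVec_mulVec, hQG]⟩

end Projection

section LinearizedLaplace

variable {n : Type*} {G Q : Matrix n n ℝ} {α τ : ℝ}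

lemma posDef_smul_one_add [DecidableEq n] (hα : 0 < α) (hG : G.PosSemidef) : (α • 1 + G).PosDef := by
  rw [smul_one_eq_diagonal]
  exact (PosDef.diagonal fun _ => hα).add_posSemidef hG

variable [Fintype n]

lemma posSemidef_sub_smul_of_le_dotProduct (hGsym : Gᵀ = G) (hQsym : Qᵀ = Q)
    (hQQ : IsIdempotentElem Q) (hQG : Q * G = G) (hQrange : ∀ v, ∃ w, Q *ᵥ v = G *ᵥ w)
    (hτ : ∀ v, (∃ w, v = G *ᵥ w) → τ * (v ⬝ᵥ v) ≤ G *ᵥ v ⬝ᵥ v) :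
    (G - τ • Q).PosSemidef := by
  have hGQ : G * Q = G := by simpa [hGsym, hQsym] using congrArg transpose hQG
  refine PosSemidef.of_dotProduct_mulVec_nonneg ?_ fun x => ?_
  · simp [IsHermitian, hGsym, hQsym]
  have hG : x ⬝ᵥ G *ᵥ x = G *ᵥ (Q *ᵥ x) ⬝ᵥ Q *ᵥ x := by
    conv_rhs => rw [mulVec_mulVec, hGQ, dotProduct_comm, ← vecMul_transpose Q x,
      ← dotProduct_mulVec, hQsym, mulVec_mulVec, hQG]
  have hQ : x ⬝ᵥ Q *ᵥ x = Q *ᵥ x ⬝ᵥ Q *ᵥ x := by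
    conv_lhs => rw [← hQQ.eq, ← mulVec_mulVec, dotProduct_mulVec, ← hQsym, vecMul_transpose, hQsym]
  obtain ⟨w, hw⟩ := hQrange x
  have := hτ _ ⟨w, hw⟩
  simp only [star_trivial, sub_mulVec, dotProduct_sub, smul_mulVec, dotProduct_smul, smul_eq_mul]
  rw [hG, hQ]
  linarith

variable [DecidableEq n]

lemma commute_inv_smul_one_add (hQG : Commute Q G) : Commute Q (α • 1 + G)⁻¹ := by
  have : Commute Q (α • 1 + G) := ((Commute.one_right Q).smul_right α).add_right hQG
  simpa only [zpow_neg_one] using Matrix.Commute.zpow_right this (-1)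

lemma inv_smul_one_add_mul_one_sub (hα : 0 < α) (hG : G.PosSemidef) (hGQ : G * Q = G) :
    (α • 1 + G)⁻¹ * (1 - Q) = α⁻¹ • (1 - Q) := by
  have hdet := (isUnit_iff_isUnit_det _).mp (posDef_smul_one_add hα hG).isUnit
  have h : (α • 1 + G) * (1 - Q) = α • (1 - Q) := by
    rw [add_mul, mul_sub G, hGQ, mul_one, sub_self, add_zero, smul_mul_assoc, one_mul]
  calc (α • 1 + G)⁻¹ * (1 - Q) = α⁻¹ • ((α • 1 + G)⁻¹ * ((α • 1 + G) * (1 - Q))) := by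
        rw [h, mul_smul_comm, inv_smul_smul₀ hα.ne']
    _ = α⁻¹ • (1 - Q) := by rw [← mul_assoc, nonsing_inv_mul _ hdet, one_mul]

lemma trace_inv_smul_one_add_mul_le (hα : 0 < α) (hG : G.PosSemidef) (hGQ : G * Q = G)
    (hτ : (G - τ • Q).PosSemidef) : (τ + α) * ((α • 1 + G)⁻¹ * Q).trace ≤ Q.trace := by
  have hM := posDef_smul_one_add hα hG
  set A := (α • 1 + G)⁻¹
  have hAG : A * G = Q - α • (A * Q) := by
    rw [← hGQ, ← add_sub_cancel_left (α • 1) G, sub_mul, mul_sub, ← mul_assoc,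
      nonsing_inv_mul _ ((isUnit_iff_isUnit_det _).mp hM.isUnit), smul_mul_assoc, one_mul,
      mul_smul_comm]
  have hkey : A * (G - τ • Q) = Q - (τ + α) • (A * Q) := by
    rw [mul_sub, hAG, mul_smul_comm, add_smul]
    abel
  have := hM.inv.posSemidef.trace_mul_nonneg hτ
  rw [hkey, trace_sub, trace_smul, smul_eq_mul] at this
  linarith

end LinearizedLaplace

end Matrix

theorem wasserstein_bound_lla_vs_projected_general
    (P : ℕ)
    (G : Matrix (Fin P) (Fin P) ℝ) (hG : G.PosSemidef)
    (α : ℝ) (hα : 0 < α)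
    (τ : ℝ) (hτ : 0 < τ)
    -- `τ` is the smallest nonzero eigenvalue of `G`:
    (hτ_le : ∀ v : Fin P → ℝ, (∃ w, v = G.mulVec w) → τ * (v ⬝ᵥ v) ≤ G.mulVec v ⬝ᵥ v)
    -- `Q` is the orthogonal projection onto the image of `G`:
    (Q : Matrix (Fin P) (Fin P) ℝ)
    (hQsym : Qᵀ = Q) (hQidem : Q * Q = Q)
    (hQfix : Q * G = G)
    (hQrange : ∀ v : Fin P → ℝ, ∃ w, Q.mulVec v = G.mulVec w)
    -- the two covariances and their positive semidefiniteness: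
    (A B : Matrix (Fin P) (Fin P) ℝ)
    (hAdef : A = (α • (1 : Matrix (Fin P) (Fin P) ℝ) + G)⁻¹)
    (hBdef : B = α⁻¹ • ((1 : Matrix (Fin P) (Fin P) ℝ) - Q))
    (hA : A.PosSemidef) (hB : B.PosSemidef) :
    Aᵀ = A ∧ Bᵀ = B ∧ A * B = B * A ∧
    Matrix.trace ((hA.sqrt - hB.sqrt)ᵀ * (hA.sqrt - hB.sqrt)) ≤ (G.rank : ℝ) / (τ + α) := by
  have hGsym : Gᵀ = G := by simpa using hG.1.eq
  have hGQ : G * Q = G := by simpa [hGsym, hQsym] using congrArg transpose hQfix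
  have hAQ : Commute A Q := hAdef ▸ (commute_inv_smul_one_add (hQfix.trans hGQ.symm)).symm
  have hBA : B = A * (1 - Q) := by rw [hBdef, hAdef, inv_smul_one_add_mul_one_sub hα hG hGQ]
  have hbound := trace_inv_smul_one_add_mul_le hα hG hGQ
    (posSemidef_sub_smul_of_le_dotProduct hGsym hQsym hQidem hQfix hQrange hτ_le)
  rw [← hAdef, trace_eq_rank_of_isIdempotentElem hQidem,
    rank_eq_of_mul_eq_of_range hQfix hQrange] at hbound
  refine ⟨by simpa using hA.1.eq, by simpa using hB.1.eq, ?_, ?_⟩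
  · rw [hBA]
    exact (Commute.refl A).mul_right ((Commute.one_right A).sub_right hAQ)
  · subst hBA
    rw [← conjTranspose_eq_transpose_of_trivial,
      hA.trace_sqrt_sub_sqrt ((conjTranspose_eq_transpose_of_trivial Q).trans hQsym) hQidem hAQ,
      le_div_iff₀ (by positivity)]
    linarith

/-- With `A = (α I + G)⁻¹` the LLA covariance and `B = α⁻¹ (I - 𝒫(G))` the
scaled projected covariance, `A` and `B` commute and the squared Frobenius distance between
their psd square roots — i.e. the squared 2-Wasserstein distance between the two Gaussians
`N(θ₀, A)` and `N(θ₀, B)` — is at most `k/(τ + α)`, where `k = rank(G)` and `τ` is the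
smallest nonzero eigenvalue of `G`.  (For real matrices, `‖X‖_F² = tr(Xᵀ X)`.) -/
theorem wasserstein_bound_lla_vs_projected
    (P : ℕ)
    (G : Matrix (Fin P) (Fin P) ℝ) (hG : G.PosSemidef) (hG0 : G ≠ 0)
    (α : ℝ) (hα : 0 < α)
    (τ : ℝ) (hτ : 0 < τ)
    -- `τ` is the smallest nonzero eigenvalue of `G`:
    (hτ_le : ∀ v : Fin P → ℝ, (∃ w, v = G.mulVec w) → τ * (v ⬝ᵥ v) ≤ G.mulVec v ⬝ᵥ v)
    (hτ_ex : ∃ v : Fin P → ℝ, v ≠ 0 ∧ G.mulVec v = τ • v)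
    -- `Q` is the orthogonal projection onto the image of `G`:
    (Q : Matrix (Fin P) (Fin P) ℝ)
    (hQsym : Qᵀ = Q) (hQidem : Q * Q = Q)
    (hQfix : Q * G = G)
    (hQrange : ∀ v : Fin P → ℝ, ∃ w, Q.mulVec v = G.mulVec w)
    -- the two covariances and their positive semidefiniteness:
    (A B : Matrix (Fin P) (Fin P) ℝ)
    (hAdef : A = (α • (1 : Matrix (Fin P) (Fin P) ℝ) + G)⁻¹)
    (hBdef : B = α⁻¹ • ((1 : Matrix (Fin P) (Fin P) ℝ) - Q))
    (hA : A.PosSemidef) (hB : B.PosSemidef) :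
    Aᵀ = A ∧ Bᵀ = B ∧ A * B = B * A ∧
    Matrix.trace ((hA.sqrt - hB.sqrt)ᵀ * (hA.sqrt - hB.sqrt)) ≤ (G.rank : ℝ) / (τ + α) :=
  wasserstein_bound_lla_vs_projected_general P G hG α hα τ hτ hτ_le Q hQsym hQidem hQfix hQrange A B
    hAdef hBdef hA hB
end

section
/- Let S₁, …, S_B be linear subspaces of ℝ^P, let Q_b denote the orthogonal projection onto S_b, and let Q denote the orthogonal projection onto the intersection ⋂_{b=1}^{B} S_b. Then for every x ∈ ℝ^P, the iterated cyclic products converge: lim_{t → ∞} (Q_B Q_{B−1} ⋯ Q₁)^t x = Q x. In particular, for any row-partition of a matrix M ∈ ℝ^{m × P} into blocks M₁, …, M_B, taking S_b = ker(M_bᵀ M_b) gives I_P − 𝒫(Mᵀ M) = lim_{t → ∞} (∏_b (I_P − 𝒫(M_bᵀ M_b)))^t. -/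
/-!
Let `T = P_{K₁} ⋯ P_{Kₙ}` and let `P` be the orthogonal projection onto `F = ⋂ Kᵢ`. Each factor
fixes `F`, so `T P = P`, and `P P_{Kᵢ} = P`, so `P T = P`; hence `T^(t+1) = (T - P)^(t+1) + P`,
and it suffices that `‖T - P‖ < 1`. Now `T - P = T ∘ P_{Fᗮ}`, and `T` is a strict contraction on
`Fᗮ ∖ {0}`: it never increases norms, and `‖T y‖ = ‖y‖` forces `P_{Kᵢ}` to fix `y` at every
stage, i.e. `y ∈ F`. In finite dimension the unit sphere is compact, so a pointwise strict
contraction has operator norm `< 1`.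
-/

open Filter Matrix Topology

theorem List.iInf_mem_ofFn {α : Type*} [CompleteLattice α] {n : ℕ} (f : Fin n → α) :
    ⨅ a ∈ List.ofFn f, a = ⨅ i, f i :=
  le_antisymm (le_iInf fun i => biInf_le _ (List.mem_ofFn.2 ⟨i, rfl⟩))
    (le_iInf₂ fun a ha => by obtain ⟨i, rfl⟩ := List.mem_ofFn.1 ha; exact iInf_le _ i)

theorem ContinuousLinearMap.opNorm_lt_one_of_norm_apply_lt {𝕜 E F : Type*} [RCLike 𝕜]
    [NormedAddCommGroup E] [NormedSpace 𝕜 E] [FiniteDimensional 𝕜 E]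
    [NormedAddCommGroup F] [NormedSpace 𝕜 F]
    (f : E →L[𝕜] F) (hf : ∀ x ≠ 0, ‖f x‖ < ‖x‖) : ‖f‖ < 1 := by
  have := FiniteDimensional.proper_rclike 𝕜 E
  rcases (Metric.sphere (0 : E) 1).eq_empty_or_nonempty with hempty | hne
  · have : ‖f‖ ≤ 0 := opNorm_le_of_unit_norm le_rfl fun x hx =>
      (hempty.subset (mem_sphere_zero_iff_norm.2 hx)).elim
    linarith
  · obtain ⟨z, hz, hmax⟩ := (isCompact_sphere (0 : E) 1).exists_isMaxOn hne
      (continuous_norm.comp f.continuous).continuousOn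
    have hz1 : ‖z‖ = 1 := mem_sphere_zero_iff_norm.1 hz
    calc ‖f‖ ≤ ‖f z‖ := opNorm_le_of_unit_norm (norm_nonneg _) fun x hx =>
          hmax (mem_sphere_zero_iff_norm.2 hx)
      _ < 1 := hz1 ▸ hf z (norm_ne_zero_iff.1 (hz1 ▸ one_ne_zero))

theorem pow_succ_eq_sub_pow_succ_add {R : Type*} [Ring R] {p t : R} (hp : IsIdempotentElem p)
    (htp : t * p = p) (hpt : p * t = p) (n : ℕ) : t ^ (n + 1) = (t - p) ^ (n + 1) + p := by
  induction n with
  | zero => simp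
  | succ n ih =>
    have hkill : (t - p) * p = 0 := by rw [sub_mul, htp, hp.eq, sub_self]
    rw [pow_succ, ih, add_mul, hpt, pow_succ (t - p) (n + 1), mul_sub, pow_succ (t - p) n,
      mul_assoc _ (t - p) p, hkill, mul_zero, sub_zero]

namespace Submodule

variable {𝕜 E : Type*} [RCLike 𝕜] [NormedAddCommGroup E] [InnerProductSpace 𝕜 E]
  [FiniteDimensional 𝕜 E]

noncomputable def prodStarProjection (L : List (Submodule 𝕜 E)) : E →L[𝕜] E :=
  (L.map fun K => K.starProjection).prod

@[simp] theorem prodStarProjection_nil : prodStarProjection ([] : List (Submodule 𝕜 E)) = 1 := rfl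

@[simp] theorem prodStarProjection_cons (K : Submodule 𝕜 E) (L : List (Submodule 𝕜 E)) :
    prodStarProjection (K :: L) = K.starProjection * prodStarProjection L := rfl

theorem norm_prodStarProjection_apply_le (L : List (Submodule 𝕜 E)) (x : E) :
    ‖prodStarProjection L x‖ ≤ ‖x‖ := by
  induction L with
  | nil => simp
  | cons K L ih => exact (K.norm_starProjection_apply_le _).trans ih

theorem prodStarProjection_apply_of_mem {L : List (Submodule 𝕜 E)} {x : E}
    (hx : ∀ K ∈ L, x ∈ K) : prodStarProjection L x = x := by
  induction L with
  | nil => simp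
  | cons K L ih =>
    simp only [List.forall_mem_cons] at hx
    simp [ih hx.2, starProjection_eq_self_iff.2 hx.1]

theorem mem_of_norm_prodStarProjection_apply_eq {L : List (Submodule 𝕜 E)} {x : E}
    (hx : ‖prodStarProjection L x‖ = ‖x‖) : ∀ K ∈ L, x ∈ K := by
  induction L with
  | nil => simp
  | cons K L ih =>
    have hK : ‖K.starProjection (prodStarProjection L x)‖ = ‖x‖ := hx
    have hL : ‖prodStarProjection L x‖ = ‖x‖ := le_antisymm (norm_prodStarProjection_apply_le L x)
      (hK ▸ K.norm_starProjection_apply_le _)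
    have hxL := ih hL
    rw [prodStarProjection_apply_of_mem hxL] at hK
    exact List.forall_mem_cons.2 ⟨(K.mem_iff_norm_starProjection x).2 hK, hxL⟩

theorem prodStarProjection_mul_starProjection_of_le {L : List (Submodule 𝕜 E)}
    {F : Submodule 𝕜 E} (hF : ∀ K ∈ L, F ≤ K) :
    prodStarProjection L * F.starProjection = F.starProjection :=
  ContinuousLinearMap.ext fun x =>
    prodStarProjection_apply_of_mem fun K hK => hF K hK (F.starProjection_apply_mem x)

theorem starProjection_mul_prodStarProjection_of_le {L : List (Submodule 𝕜 E)}
    {F : Submodule 𝕜 E} (hF : ∀ K ∈ L, F ≤ K) :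
    F.starProjection * prodStarProjection L = F.starProjection := by
  induction L with
  | nil => simp
  | cons K L ih =>
    simp only [List.forall_mem_cons] at hF
    rw [prodStarProjection_cons, ← mul_assoc, ContinuousLinearMap.mul_def F.starProjection,
      starProjection_comp_starProjection_of_le hF.1, ih hF.2]

theorem norm_prodStarProjection_apply_lt {L : List (Submodule 𝕜 E)} {y : E}
    (hy : y ∈ (⨅ K ∈ L, K)ᗮ) (hy0 : y ≠ 0) : ‖prodStarProjection L y‖ < ‖y‖ := by
  refine (norm_prodStarProjection_apply_le L y).lt_of_ne fun h => hy0 ?_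
  have hyF : y ∈ ⨅ K ∈ L, K := by
    simpa only [mem_iInf] using mem_of_norm_prodStarProjection_apply_eq h
  simpa using (⨅ K ∈ L, K).inf_orthogonal_eq_bot.le ⟨hyF, hy⟩

theorem tendsto_prodStarProjection_pow_apply (L : List (Submodule 𝕜 E)) (x : E) :
    Tendsto (fun t => (prodStarProjection L ^ t) x) atTop (𝓝 ((⨅ K ∈ L, K).starProjection x)) := by
  set F := ⨅ K ∈ L, K
  set T := prodStarProjection L
  set P := F.starProjection
  have hF : ∀ K ∈ L, F ≤ K := fun K hK => biInf_le _ hK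
  have hR : T - P = T * Fᗮ.starProjection := by
    rw [starProjection_orthogonal', mul_sub, mul_one,
      prodStarProjection_mul_starProjection_of_le hF]
  have hRnorm : ‖T - P‖ < 1 := by
    refine ContinuousLinearMap.opNorm_lt_one_of_norm_apply_lt _ fun y hy => ?_
    rw [hR, mul_apply_eq_comp]
    by_cases h0 : Fᗮ.starProjection y = 0
    · simpa [h0] using hy
    · exact (norm_prodStarProjection_apply_lt (starProjection_apply_mem _ _) h0).trans_le
        (norm_starProjection_apply_le _ _)
  have hpow : ∀ n, T ^ (n + 1) = (T - P) ^ (n + 1) + P :=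
    pow_succ_eq_sub_pow_succ_add F.isIdempotentElem_starProjection
      (prodStarProjection_mul_starProjection_of_le hF)
      (starProjection_mul_prodStarProjection_of_le hF)
  have hR0 : Tendsto (fun n => ((T - P) ^ n) x) atTop (𝓝 0) := by
    simpa only [Function.comp_def, ContinuousLinearMap.apply_apply, map_zero] using
      ((ContinuousLinearMap.apply 𝕜 E x).continuous.tendsto 0).comp
        (tendsto_pow_atTop_nhds_zero_of_norm_lt_one hRnorm)
  rw [← tendsto_add_atTop_iff_nat 1]
  simpa [hpow] using ((tendsto_add_atTop_iff_nat 1).2 hR0).add_const (P x)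

theorem tendsto_ofFn_rev_starProjection_prod_pow_apply {B : ℕ} (S : Fin B → Submodule 𝕜 E)
    (x : E) :
    Tendsto (fun t => ((List.ofFn fun i => (S i.rev).starProjection).prod ^ t) x) atTop
      (𝓝 ((⨅ b, S b).starProjection x)) := by
  have hF : ⨅ K ∈ List.ofFn fun i => S i.rev, K = ⨅ b, S b := by
    rw [List.iInf_mem_ofFn]
    exact Fin.revPerm.iInf_comp (g := S)
  simpa only [hF, prodStarProjection, List.map_ofFn, Function.comp_def] using
    tendsto_prodStarProjection_pow_apply (List.ofFn fun i => S i.rev) x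

end Submodule

namespace Matrix

variable {𝕜 n : Type*} [RCLike 𝕜] [Fintype n] [DecidableEq n]

theorem ker_toEuclideanLin {m : Type*} (A : Matrix m n 𝕜) :
    LinearMap.ker (toEuclideanLin A) =
      (LinearMap.ker A.mulVecLin).comap (WithLp.linearEquiv 2 𝕜 (n → 𝕜)).toLinearMap := by
  ext x
  rw [LinearMap.mem_ker, ← WithLp.ofLp_eq_zero 2]
  rfl

theorem ker_toEuclideanLin_transpose_mul_self {m : Type*} [Fintype m] (A : Matrix m n ℝ) :
    LinearMap.ker (toEuclideanLin (Aᵀ * A)) = LinearMap.ker (toEuclideanLin A) := by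
  rw [ker_toEuclideanLin, ker_toEuclideanLin, ker_mulVecLin_transpose_mul_self]

theorem ker_toEuclideanLin_eq_iInf_submatrix {ι : Type*} {m : ι → Type*}
    (A : Matrix (Σ i, m i) n 𝕜) :
    LinearMap.ker (toEuclideanLin A) =
      ⨅ i, LinearMap.ker (toEuclideanLin (A.submatrix (Sigma.mk i) id)) := by
  ext x
  simp [ker_toEuclideanLin, Submodule.mem_iInf, funext_iff, Sigma.forall, mulVec, submatrix]

end Matrix

/-- **von Neumann–Halperin alternating projections.** For subspaces
`S₁, …, S_B` of `ℝ^P` with orthogonal projections `Q₁, …, Q_B` and `Q` the orthogonal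
projection onto `⋂_b S_b`, the cyclic products `(Q_B ⋯ Q₁)^t x` converge to `Q x` for every
`x`.  In particular, for a row-partitioned matrix `M = [M₁; …; M_B]`, taking
`S_b = ker(M_bᵀ M_b)` gives `I - 𝒫(Mᵀ M) = lim_t (∏_b (I - 𝒫(M_bᵀ M_b)))^t` applied to any
vector. -/
theorem alternating_projections_converge
    (Pdim B : ℕ)
    (S : Fin B → Submodule ℝ (EuclideanSpace ℝ (Fin Pdim)))
    (m : Fin B → ℕ)
    (M : Matrix ((b : Fin B) × Fin (m b)) (Fin Pdim) ℝ) :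
    (∀ x : EuclideanSpace ℝ (Fin Pdim),
      Tendsto
        (fun t : ℕ =>
          (((List.ofFn fun i : Fin B =>
              (S i.rev).subtypeL.comp (Submodule.orthogonalProjectionOnto (S i.rev))).prod ^ t) x))
        atTop
        (nhds ((⨅ b, S b).subtypeL (Submodule.orthogonalProjectionOnto (⨅ b, S b) x)))) ∧
    (∀ x : EuclideanSpace ℝ (Fin Pdim),
      Tendsto
        (fun t : ℕ =>
          (((List.ofFn fun i : Fin B =>
              (LinearMap.ker (Matrix.toEuclideanLin
                  ((M.submatrix (Sigma.mk i.rev) id)ᵀ * M.submatrix (Sigma.mk i.rev) id))).subtypeL.comp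
                (Submodule.orthogonalProjectionOnto (LinearMap.ker (Matrix.toEuclideanLin
                  ((M.submatrix (Sigma.mk i.rev) id)ᵀ * M.submatrix (Sigma.mk i.rev) id))))).prod ^ t) x))
        atTop
        (nhds ((LinearMap.ker (Matrix.toEuclideanLin (Mᵀ * M))).subtypeL
          (Submodule.orthogonalProjectionOnto (LinearMap.ker (Matrix.toEuclideanLin (Mᵀ * M))) x)))) := by
  refine ⟨Submodule.tendsto_ofFn_rev_starProjection_prod_pow_apply S, fun x => ?_⟩
  have hker : ⨅ b, LinearMap.ker (toEuclideanLin
      ((M.submatrix (Sigma.mk b) id)ᵀ * M.submatrix (Sigma.mk b) id)) =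
        LinearMap.ker (toEuclideanLin (Mᵀ * M)) := by
    simp only [ker_toEuclideanLin_transpose_mul_self, ker_toEuclideanLin_eq_iInf_submatrix M]
  have h := Submodule.tendsto_ofFn_rev_starProjection_prod_pow_apply
    (fun b => LinearMap.ker (toEuclideanLin
      ((M.submatrix (Sigma.mk b) id)ᵀ * M.submatrix (Sigma.mk b) id))) x
  rwa [hker] at h
end
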